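/- arXiv:1212.6263 — 5 statements merged into one kernel-verified Lean document; each statement's English description precedes it below -/
import Mathlib

section
/- The Y-system of type A_2 has period 10: the sequence in Q(u_1, u_2) defined by Y_1(0) = u_1, Y_2(0) = u_2 and the recurrence Y_i(k+1) = Y_i(k) ∏_j (Y_j(k)+1)^{a_ij} if ε(i) = (-1)^{k+1}, and Y_i(k+1) = Y_i(k)^{-1} if ε(i) = (-1)^k, where A = [[0,1],[1,0]], ε(1) = -1, ε(2) = +1, satisfies Y_1(10) = u_1 and Y_2(10) = u_2. -/
/-!
Five steps of the recurrence send the initial values `(x, y)` to `(y, x)`. The rule applied at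
step `k + 1` is the rule of step `k` with the two vertices exchanged, so this twisted half-period
propagates along the whole sequence, and applying it twice gives period 10.
-/

open Function

namespace YSystemA2

variable {K : Type*} [Field K]

def step (k : ℕ) (Y : Fin 2 → K) : Fin 2 → K :=
  if Even k then ![Y 0 * (Y 1 + 1), (Y 1)⁻¹] else ![(Y 0)⁻¹, Y 1 * (Y 0 + 1)]

theorem step_apply_eq_ite (k : ℕ) (Y : Fin 2 → K) (i : Fin 2) :
    step k Y i =
      if (if i = 0 then -1 else 1 : ℤ) = (-1) ^ (k + 1)
      then Y i * ∏ j, (Y j + 1) ^ (if i = j then 0 else 1)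
      else (Y i)⁻¹ := by
  rcases Nat.even_or_odd k with hk | hk <;> fin_cases i <;>
    simp [step, hk, Fin.prod_univ_two, pow_succ, hk.neg_one_pow, Nat.not_even_iff_odd.mpr]

theorem step_add_two (k : ℕ) : step (K := K) (k + 2) = step k := by
  funext Y
  simp only [step, Nat.even_add, even_two, iff_true]

theorem step_succ_comp_rev (k : ℕ) (Y : Fin 2 → K) :
    step (k + 1) (Y ∘ Fin.rev) = step k Y ∘ Fin.rev := by
  by_cases hk : Even k <;> funext i <;> fin_cases i <;> simp [step, hk, Nat.even_add_one]

variable {Y : ℕ → Fin 2 → K}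

theorem five_eq_comp_rev (hY : ∀ k, Y (k + 1) = step k (Y k)) {x y : K} (h0 : Y 0 = ![x, y])
    (hx : x ≠ 0) (hy : y ≠ 0) (hx1 : x + 1 ≠ 0) (hy1 : y + 1 ≠ 0) (hxy : x * (y + 1) + 1 ≠ 0) :
    Y 5 = Y 0 ∘ Fin.rev := by
  have h1 : Y 1 = ![x * (y + 1), y⁻¹] := by simp [hY, h0, step]
  have h2 : Y 2 = ![(x * (y + 1))⁻¹, (x * (y + 1) + 1) / y] := by
    rw [hY, h1]; simp [step]; field_simp
  have h3 : Y 3 = ![(x + 1) / (x * y), y / (x * (y + 1) + 1)] := by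
    rw [hY, h2]; simp [step]; field_simp; ring
  have h4 : Y 4 = ![x * y / (x + 1), x⁻¹] := by
    rw [hY, h3]; simp [step, Nat.even_iff]; field_simp; ring
  calc Y 5 = ![y, x] := by rw [hY, h4]; simp [step, Nat.even_iff]; field_simp; ring
    _ = Y 0 ∘ Fin.rev := by rw [h0]; funext i; fin_cases i <;> rfl

theorem add_five_eq_comp_rev (hY : ∀ k, Y (k + 1) = step k (Y k))
    (h5 : Y 5 = Y 0 ∘ Fin.rev) (k : ℕ) : Y (k + 5) = Y k ∘ Fin.rev := by
  induction k with
  | zero => exact h5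
  | succ k ih =>
    rw [show k + 1 + 5 = k + 5 + 1 by ring, hY, ih, hY, ← step_succ_comp_rev, step_add_two,
      step_add_two]

theorem periodic_ten (hY : ∀ k, Y (k + 1) = step k (Y k)) (h5 : Y 5 = Y 0 ∘ Fin.rev) :
    Periodic Y 10 := fun k => by
  rw [add_five_eq_comp_rev hY h5, add_five_eq_comp_rev hY h5, comp_assoc,
    Fin.rev_involutive.comp_self, comp_id]

end YSystemA2

/-- The Y-system of type A₂ has period 10.  Work in `ℚ(u₁, u₂)`; vertex `0`
has `ε = -1` and vertex `1` has `ε = +1`; the incidence matrix is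
`a₀₁ = a₁₀ = 1`, `a₀₀ = a₁₁ = 0`.  At step `k`, a vertex `i` with
`ε(i) = (-1)^(k+1)` is multiplied by `∏_j (Y_j + 1)^(a_ij)`, and a vertex with
`ε(i) = (-1)^k` is inverted.  Then `Y(10) = Y(0)`. -/
theorem typeA2_Ysystem_period_ten
    (Y : ℕ → Fin 2 → FractionRing (MvPolynomial (Fin 2) ℚ)) :
    let F := FractionRing (MvPolynomial (Fin 2) ℚ)
    let u : Fin 2 → F := fun i => algebraMap (MvPolynomial (Fin 2) ℚ) F (MvPolynomial.X i)
    let ε : Fin 2 → ℤ := fun i => if i = 0 then -1 else 1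
    let a : Fin 2 → Fin 2 → ℕ := fun i j => if i = j then 0 else 1
    (∀ i, Y 0 i = u i) →
    (∀ k i, Y (k + 1) i =
      if ε i = (-1 : ℤ) ^ (k + 1)
      then Y k i * ∏ j, (Y k j + 1) ^ (a i j)
      else (Y k i)⁻¹) →
    (Y 10 0 = u 0 ∧ Y 10 1 = u 1) := by
  intro F u ε a h0 hrec
  have hY : ∀ k, Y (k + 1) = YSystemA2.step k (Y k) := fun k =>
    funext fun i => (hrec k i).trans (YSystemA2.step_apply_eq_ite k (Y k) i).symm
  have hu : Y 0 = ![u 0, u 1] := funext fun i => by fin_cases i <;> exact h0 _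
  have hne (p : MvPolynomial (Fin 2) ℚ) (hp : MvPolynomial.eval 1 p ≠ 0) : algebraMap _ F p ≠ 0 :=
    (map_ne_zero_iff _ (IsFractionRing.injective _ F)).mpr
      (ne_of_apply_ne (MvPolynomial.eval 1) (by simpa using hp))
  have h5 := YSystemA2.five_eq_comp_rev hY hu
    (hne (MvPolynomial.X 0) (by simp)) (hne (MvPolynomial.X 1) (by simp))
    (by convert hne (MvPolynomial.X 0 + 1) (by norm_num) using 1; simp [u])
    (by convert hne (MvPolynomial.X 1 + 1) (by norm_num) using 1; simp [u])
    (by convert hne (MvPolynomial.X 0 * (MvPolynomial.X 1 + 1) + 1) (by norm_num) using 1; simp [u])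
  have h10 := YSystemA2.periodic_ten hY h5 0
  exact ⟨congrFun h10 0 ▸ h0 0, congrFun h10 1 ▸ h0 1⟩
end

section
/- In the tropical semifield, Y-seed mutation of coefficients reduces to extended exchange matrix mutation: if y_j = ∏_{i=n+1}^m x_i^{b_ij} encodes the coefficient tuple via the bottom rows of an (m×n) extended exchange matrix B̃, then the mutated coefficients y'_j = y_k^{-1} (for j = k) and y'_j = y_j y_k^{[b_kj]_+} (y_k ⊕ 1)^{-b_kj} (for j ≠ k) are encoded by the matrix μ_k(B̃) given by the usual matrix mutation rule applied to all m rows. -/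
/-- Mutation of an extended exchange matrix (rows indexed by the `n` mutable
indices plus `c` frozen indices, columns by the `n` mutable indices). -/
def mutExt {n c : ℕ} (M : Matrix (Fin n ⊕ Fin c) (Fin n) ℤ) (k : Fin n) :
    Matrix (Fin n ⊕ Fin c) (Fin n) ℤ :=
  Matrix.of fun i j =>
    if i = Sum.inl k ∨ j = k then -M i j
    else M i j + max (M i k) 0 * max (M (Sum.inl k) j) 0
           - max (-M i k) 0 * max (-M (Sum.inl k) j) 0

/-- In the tropical semifield `Trop(x_{n+1}, …, x_m)` (elements are exponent
vectors in `ℤ^c`, multiplication is vector addition, `⊕` is componentwise min,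
and `1` is the zero vector), Y-seed mutation of the coefficients
`y_j = ∏_i x_i^{b_ij}` encoded by the bottom `c` rows of the extended exchange
matrix is given by matrix mutation of the extended exchange matrix: the
exponent of `x_i` in `y'_j` equals `(μ_k B̃)_{ij}`. -/
theorem tropical_coefficient_mutation {n c : ℕ}
    (M : Matrix (Fin n ⊕ Fin c) (Fin n) ℤ)
    (hB : ∃ d : Fin n → ℤ, (∀ i, 0 < d i) ∧
      ∀ i j : Fin n, d i * M (Sum.inl i) j = -(d j * M (Sum.inl j) i))
    (k : Fin n) :
    let y : Fin n → Fin c → ℤ := fun j i => M (Sum.inr i) j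
    let y' : Fin n → Fin c → ℤ := fun j =>
      if j = k then (fun i => -(y k i))
      else fun i => y j i + max (M (Sum.inl k) j) 0 * y k i
        + (-(M (Sum.inl k) j)) * min (y k i) 0
    ∀ (j : Fin n) (i : Fin c), y' j i = mutExt M k (Sum.inr i) j := by
  intro y y' j i
  by_cases hj : j = k
  · subst hj
    simp [y', y, mutExt]
  · simp only [y', y, mutExt, Matrix.of_apply, if_neg hj, reduceCtorEq, false_or, if_neg hj]
    set a := M (Sum.inr i) k with ha
    set b := M (Sum.inl k) j with hb
    rcases le_total a 0 with h1 | h1 <;> rcases le_total b 0 with h2 | h2 <;>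
      simp [max_eq_left, max_eq_right, min_eq_left, min_eq_right, h1, h2,
        neg_nonneg.mpr, neg_nonpos.mpr] <;> ring
end

section
/- Any two triangulations of a convex polygon are connected by a sequence of flips: given triangulations T and T' of a convex d-gon, there is a finite sequence of flips (replacing the diagonal of a quadrilateral formed by two adjacent triangles with the other diagonal) transforming T into T'. -/
/-- A pair `(a, b)` of vertices of a convex `d`-gon (vertices `0, …, d-1` in
cyclic order) is a diagonal if `a < b`, they are not consecutive, and they are
not the pair `{0, d-1}` of cyclically adjacent vertices. -/
def IsDiag (d : ℕ) (p : Fin d × Fin d) : Prop :=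
  (p.1 : ℕ) + 1 < (p.2 : ℕ) ∧ ¬((p.1 : ℕ) = 0 ∧ (p.2 : ℕ) = d - 1)

/-- Two chords of a convex polygon cross iff their endpoints interlace. -/
def Crosses {d : ℕ} (p q : Fin d × Fin d) : Prop :=
  (p.1 < q.1 ∧ q.1 < p.2 ∧ p.2 < q.2) ∨ (q.1 < p.1 ∧ p.1 < q.2 ∧ q.2 < p.2)

/-- A triangulation of a convex `d`-gon: a maximal set of pairwise noncrossing
diagonals. -/
def IsTriangulation (d : ℕ) (T : Finset (Fin d × Fin d)) : Prop :=
  (∀ p ∈ T, IsDiag d p) ∧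
  (∀ p ∈ T, ∀ q ∈ T, ¬ Crosses p q) ∧
  (∀ q, IsDiag d q → q ∉ T → ∃ p ∈ T, Crosses p q)

/-- A flip: replace a single diagonal `p` of a triangulation `T` by another
diagonal `q` (the other diagonal of the quadrilateral containing `p`), so that
the result is again a triangulation. -/
def FlipRel (d : ℕ) (T T' : Finset (Fin d × Fin d)) : Prop :=
  IsTriangulation d T ∧ IsTriangulation d T' ∧
  ∃ p q, p ∈ T ∧ p ∉ T' ∧ q ∈ T' ∧ q ∉ T ∧ T' = insert q (T.erase p)

/-!
Every triangulation can be flipped to the fan at vertex `0`. If some diagonal misses `0`, take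
a longest one `ab`. Then `0a` and `0b` are edges (a diagonal crossing them would be longer than
`ab`), and with the triangle `amb` on the inner side of `ab` they bound the quadrilateral `0amb`,
in which `ab` flips to `0m`. This lowers the number of diagonals missing `0`; the fan is the only
triangulation with none, so any two triangulations are joined through it.
-/

section

variable {d : ℕ} {T : Finset (Fin d × Fin d)} {v₁ v₂ v₃ v₄ : Fin d}

theorem crosses_comm {p q : Fin d × Fin d} : Crosses p q ↔ Crosses q p := or_comm

theorem not_crosses_self (p : Fin d × Fin d) : ¬ Crosses p p := by
  rintro (⟨h, -⟩ | ⟨h, -⟩) <;> exact lt_irrefl _ h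

def IsPolygonSide (d : ℕ) (p : Fin d × Fin d) : Prop :=
  (p.1 : ℕ) + 1 = p.2 ∨ ((p.1 : ℕ) = 0 ∧ (p.2 : ℕ) = d - 1)

theorem not_crosses_of_isPolygonSide {p : Fin d × Fin d} (hp : IsPolygonSide d p)
    (q : Fin d × Fin d) : ¬ Crosses p q := by
  have := q.2.isLt
  simp only [IsPolygonSide, Crosses, Fin.lt_def] at *
  omega

def IsEdge (d : ℕ) (T : Finset (Fin d × Fin d)) (p : Fin d × Fin d) : Prop :=
  IsPolygonSide d p ∨ p ∈ T

theorem IsEdge.mem_of_crosses {p q : Fin d × Fin d}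
    (hp : IsEdge d T p) (hpq : Crosses p q) : p ∈ T :=
  hp.resolve_left fun h => not_crosses_of_isPolygonSide h q hpq

theorem IsTriangulation.not_crosses_of_isEdge (hT : IsTriangulation d T) {p q : Fin d × Fin d}
    (hp : IsEdge d T p) (hq : q ∈ T) : ¬ Crosses p q :=
  fun hpq => hT.2.1 p (hp.mem_of_crosses hpq) q hq hpq

def quadSides (v₁ v₂ v₃ v₄ : Fin d) : List (Fin d × Fin d) :=
  [(v₁, v₂), (v₂, v₃), (v₃, v₄), (v₁, v₄)]

theorem eq_of_crosses_diagonal_of_not_crosses_quadSides (h₁₂ : v₁ < v₂) (h₂₃ : v₂ < v₃)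
    (h₃₄ : v₃ < v₄) {q : Fin d × Fin d}
    (hq : ∀ s ∈ quadSides v₁ v₂ v₃ v₄, ¬ Crosses s q) :
    (Crosses (v₁, v₃) q → q = (v₂, v₄)) ∧ (Crosses (v₂, v₄) q → q = (v₁, v₃)) := by
  obtain ⟨x, y⟩ := q
  simp only [quadSides, List.mem_cons, List.not_mem_nil, forall_eq_or_imp, or_false,
    forall_eq, Crosses, Prod.mk.injEq, Fin.ext_iff, Fin.lt_def] at *
  constructor <;> intro <;> omega

theorem IsTriangulation.flip (hT : IsTriangulation d T) (h₁₂ : v₁ < v₂) (h₂₃ : v₂ < v₃)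
    (h₃₄ : v₃ < v₄) (hsides : ∀ s ∈ quadSides v₁ v₂ v₃ v₄, IsEdge d T s) :
    IsTriangulation d (insert (v₁, v₃) (T.erase (v₂, v₄))) := by
  have hdiag_eq (q : Fin d × Fin d) (hq : ∀ s ∈ quadSides v₁ v₂ v₃ v₄, ¬ Crosses s q) :=
    eq_of_crosses_diagonal_of_not_crosses_quadSides h₁₂ h₂₃ h₃₄ hq
  have hdiag_nc : ∀ q ∈ T.erase (v₂, v₄), ¬ Crosses (v₁, v₃) q := fun q hq hc =>
    (Finset.mem_erase.1 hq).1 <| (hdiag_eq q fun s hs =>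
      hT.not_crosses_of_isEdge (hsides s hs) (Finset.mem_of_mem_erase hq)).1 hc
  refine ⟨?_, ?_, ?_⟩
  · simp only [Finset.forall_mem_insert]
    refine ⟨?_, fun p hp => hT.1 p (Finset.mem_of_mem_erase hp)⟩
    have := v₄.isLt
    simp only [IsDiag, Fin.lt_def] at h₁₂ h₂₃ h₃₄ ⊢
    omega
  · simp only [Finset.forall_mem_insert]
    exact ⟨⟨not_crosses_self _, hdiag_nc⟩, fun p hp => ⟨fun h => hdiag_nc p hp (crosses_comm.1 h),
      fun q hq => hT.2.1 p (Finset.mem_of_mem_erase hp) q (Finset.mem_of_mem_erase hq)⟩⟩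
  · intro q hq hqT
    simp only [Finset.mem_insert, Finset.mem_erase, not_or, not_and] at hqT
    obtain ⟨hq₁₃, hqT⟩ := hqT
    by_cases hq₂₄ : q = (v₂, v₄)
    · subst hq₂₄
      exact ⟨(v₁, v₃), Finset.mem_insert_self _ _, Or.inl ⟨h₁₂, h₂₃, h₃₄⟩⟩
    obtain ⟨p, hp, hpq⟩ := hT.2.2 q hq (hqT hq₂₄)
    by_cases hp₂₄ : p = (v₂, v₄)
    · subst hp₂₄
      obtain ⟨s, hs, hsq⟩ : ∃ s ∈ quadSides v₁ v₂ v₃ v₄, Crosses s q := by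
        by_contra! h
        exact hq₁₃ ((hdiag_eq q h).2 hpq)
      refine ⟨s, Finset.mem_insert_of_mem (Finset.mem_erase.2
        ⟨?_, (hsides s hs).mem_of_crosses hsq⟩), hsq⟩
      rintro rfl
      simp only [quadSides, List.mem_cons, List.not_mem_nil, or_false, true_and, and_true,
        Prod.mk.injEq, Fin.ext_iff, Fin.lt_def] at hs h₁₂ h₂₃ h₃₄
      omega
    · exact ⟨p, Finset.mem_insert_of_mem (Finset.mem_erase.2 ⟨hp₂₄, hp⟩), hpq⟩

theorem IsTriangulation.flipRel (hT : IsTriangulation d T) (h₁₂ : v₁ < v₂) (h₂₃ : v₂ < v₃)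
    (h₃₄ : v₃ < v₄) (hsides : ∀ s ∈ quadSides v₁ v₂ v₃ v₄, IsEdge d T s)
    (h₂₄ : (v₂, v₄) ∈ T) : FlipRel d T (insert (v₁, v₃) (T.erase (v₂, v₄))) := by
  have h₁₃ : (v₁, v₃) ∉ T := fun h => hT.2.1 _ h _ h₂₄ (Or.inl ⟨h₁₂, h₂₃, h₃₄⟩)
  refine ⟨hT, hT.flip h₁₂ h₂₃ h₃₄ hsides, (v₂, v₄), (v₁, v₃), h₂₄, ?_,
    Finset.mem_insert_self _ _, h₁₃, rfl⟩
  simp only [Finset.mem_insert, Finset.mem_erase, Prod.mk.injEq, ne_eq, not_true_eq_false,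
    false_and, or_false]
  exact fun h => h₁₂.ne' h.1

instance : Std.Symm (FlipRel d) where
  symm T T' := by
    rintro ⟨hT, hT', p, q, hpT, hpT', hqT', hqT, rfl⟩
    refine ⟨hT', hT, q, p, hqT', hqT, hpT, hpT', ?_⟩
    rw [Finset.erase_insert (fun h => hqT (Finset.mem_of_mem_erase h)), Finset.insert_erase hpT]

theorem IsTriangulation.exists_apex (hT : IsTriangulation d T) {a b : Fin d} (hab : (a, b) ∈ T) :
    ∃ m, a < m ∧ m < b ∧ IsEdge d T (a, m) ∧ IsEdge d T (m, b) := by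
  classical
  have hab' := hT.1 _ hab
  simp only [IsDiag] at hab'
  let C := Finset.univ.filter fun c => a < c ∧ c < b ∧ IsEdge d T (a, c)
  have hC : C.Nonempty := ⟨⟨a + 1, by omega⟩, by
    simp only [C, Finset.mem_filter, Finset.mem_univ, true_and, Fin.lt_def, IsEdge,
      IsPolygonSide, true_or, and_true]
    omega⟩
  -- `m` is the farthest vertex of `(a, b)` joined to `a`; a diagonal crossing `mb` would cross
  -- `ab` or `am`, or would join `a` to a vertex beyond `m`.
  obtain ⟨m, hmC, hm_max⟩ := C.exists_max_image id hC
  simp only [C, Finset.mem_filter, Finset.mem_univ, true_and] at hmC hm_max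
  obtain ⟨ham, hmb, ham_edge⟩ := hmC
  refine ⟨m, ham, hmb, ham_edge, ?_⟩
  by_contra hmb_edge
  have hmb_diag : IsDiag d (m, b) := by
    simp only [IsEdge, IsPolygonSide, Fin.lt_def, IsDiag] at *
    omega
  obtain ⟨⟨x, y⟩, hxy, hcross⟩ := hT.2.2 _ hmb_diag fun h => hmb_edge (Or.inr h)
  have h_ab := hT.2.1 _ hab _ hxy
  have h_am := hT.not_crosses_of_isEdge ham_edge hxy
  rcases eq_or_ne x a with rfl | hxa
  · have hy : m < y ∧ y < b := by
      simp only [Crosses, Fin.lt_def] at hcross ham ⊢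
      omega
    exact (hm_max y ⟨ham.trans hy.1, hy.2, Or.inr hxy⟩).not_gt hy.1
  · simp only [Crosses, Fin.lt_def, ne_eq, Fin.ext_iff] at *
    omega

/-- `offFan T = ∅` says that `T` is the fan of all diagonals from vertex `0`. -/
def offFan (T : Finset (Fin d × Fin d)) : Finset (Fin d × Fin d) :=
  T.filter fun p => (p.1 : ℕ) ≠ 0

theorem IsTriangulation.exists_crosses_of_not_isEdge_zero (hT : IsTriangulation d T)
    {z c : Fin d} (hz : (z : ℕ) = 0) (hc : (c : ℕ) ≠ 0) (hzc : ¬ IsEdge d T (z, c)) :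
    ∃ x y : Fin d, (x, y) ∈ T ∧ 0 < (x : ℕ) ∧ x < c ∧ c < y := by
  have hdiag : IsDiag d (z, c) := by
    simp only [IsEdge, IsPolygonSide, IsDiag, not_or] at hzc ⊢
    omega
  obtain ⟨⟨x, y⟩, hxy, hcross⟩ := hT.2.2 _ hdiag fun h => hzc (Or.inr h)
  refine ⟨x, y, hxy, ?_⟩
  simp only [Crosses, Fin.lt_def] at hcross ⊢
  omega

theorem IsTriangulation.isEdge_zero_of_longest (hT : IsTriangulation d T) {z a b : Fin d}
    (hz : (z : ℕ) = 0) (hab : (a, b) ∈ offFan T)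
    (hlongest : ∀ p ∈ offFan T, (p.2 : ℕ) - p.1 ≤ (b : ℕ) - a) :
    IsEdge d T (z, a) ∧ IsEdge d T (z, b) := by
  obtain ⟨hab, ha⟩ := Finset.mem_filter.1 hab
  have hab_diag := hT.1 _ hab
  simp only [IsDiag] at hab_diag
  have hlong (x y : Fin d) (hxy : (x, y) ∈ T) (hx : 0 < (x : ℕ)) : (y : ℕ) - x ≤ (b : ℕ) - a :=
    hlongest _ (Finset.mem_filter.2 ⟨hxy, hx.ne'⟩)
  constructor <;> by_contra h
  · obtain ⟨x, y, hxy, hx, hxa, hay⟩ := hT.exists_crosses_of_not_isEdge_zero hz ha h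
    have := hT.2.1 _ hab _ hxy
    have := hlong x y hxy hx
    simp only [Crosses, Fin.lt_def] at *
    omega
  · obtain ⟨x, y, hxy, hx, hxb, hby⟩ := hT.exists_crosses_of_not_isEdge_zero hz (by omega) h
    have := hT.2.1 _ hab _ hxy
    have := hlong x y hxy hx
    simp only [Crosses, Fin.lt_def] at *
    omega

theorem IsTriangulation.exists_flipRel_card_offFan_lt (hT : IsTriangulation d T)
    (hne : (offFan T).Nonempty) :
    ∃ T', FlipRel d T T' ∧ (offFan T').card < (offFan T).card := by
  obtain ⟨⟨a, b⟩, hab, hlongest⟩ := (offFan T).exists_max_image (fun p => (p.2 : ℕ) - p.1) hne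
  let z : Fin d := ⟨0, a.pos⟩
  obtain ⟨hza, hzb⟩ := hT.isEdge_zero_of_longest (z := z) rfl hab hlongest
  obtain ⟨habT, ha⟩ := Finset.mem_filter.1 hab
  obtain ⟨m, ham, hmb, ham_edge, hmb_edge⟩ := hT.exists_apex habT
  have hzm : z < a := Fin.lt_def.2 (Nat.pos_of_ne_zero ha)
  refine ⟨_, hT.flipRel hzm ham hmb ?_ habT, ?_⟩
  · simp only [quadSides, List.mem_cons, List.not_mem_nil, or_false, forall_eq_or_imp,
      forall_eq]
    exact ⟨hza, ham_edge, hmb_edge, hzb⟩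
  · have : offFan (insert (z, m) (T.erase (a, b))) = (offFan T).erase (a, b) := by
      simp [offFan, Finset.filter_insert, Finset.filter_erase, z]
    rw [this]
    exact Finset.card_erase_lt_of_mem hab

theorem IsTriangulation.exists_reflTransGen_offFan_eq_empty (hT : IsTriangulation d T) :
    ∃ T₀, IsTriangulation d T₀ ∧ offFan T₀ = ∅ ∧ Relation.ReflTransGen (FlipRel d) T T₀ := by
  induction hn : (offFan T).card using Nat.strong_induction_on generalizing T with
  | _ n ih =>
    rcases (offFan T).eq_empty_or_nonempty with h | h
    · exact ⟨T, hT, h, .refl⟩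
    · obtain ⟨T', hTT', hlt⟩ := hT.exists_flipRel_card_offFan_lt h
      obtain ⟨T₀, hT₀, h₀, hT'T₀⟩ := ih _ (hn ▸ hlt) hTT'.2.1 rfl
      exact ⟨T₀, hT₀, h₀, .head hTT' hT'T₀⟩

theorem IsTriangulation.subset_of_offFan_eq_empty {T' : Finset (Fin d × Fin d)}
    (hT : IsTriangulation d T) (hT' : IsTriangulation d T') (h : offFan T = ∅)
    (h' : offFan T' = ∅) : T ⊆ T' := by
  intro p hp
  by_contra hp'
  obtain ⟨q, hq, hqp⟩ := hT'.2.2 p (hT.1 p hp) hp'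
  have hp0 := not_not.1 (Finset.filter_eq_empty_iff.1 h hp)
  have hq0 := not_not.1 (Finset.filter_eq_empty_iff.1 h' hq)
  simp only [Crosses, Fin.lt_def] at hqp
  omega

theorem IsTriangulation.eq_of_offFan_eq_empty {T' : Finset (Fin d × Fin d)}
    (hT : IsTriangulation d T) (hT' : IsTriangulation d T') (h : offFan T = ∅)
    (h' : offFan T' = ∅) : T = T' :=
  (hT.subset_of_offFan_eq_empty hT' h h').antisymm (hT'.subset_of_offFan_eq_empty hT h' h)

end

/-- Any two triangulations of a convex `d`-gon are connected by a finite
sequence of flips. -/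
theorem triangulations_flip_connected (d : ℕ)
    (T T' : Finset (Fin d × Fin d))
    (hT : IsTriangulation d T) (hT' : IsTriangulation d T') :
    Relation.ReflTransGen (FlipRel d) T T' := by
  obtain ⟨T₀, hT₀, h₀, hTT₀⟩ := hT.exists_reflTransGen_offFan_eq_empty
  obtain ⟨T₁, hT₁, h₁, hT'T₁⟩ := hT'.exists_reflTransGen_offFan_eq_empty
  rw [hT₀.eq_of_offFan_eq_empty hT₁ h₀ h₁] at hTT₀
  exact hTT₀.trans (Std.Symm.symm _ _ hT'T₁)
end

section
/- In the hyperbolic upper half-plane, the lambda lengths of four decorated ideal points satisfy the Ptolemy relation: if α, β, γ, δ are the consecutive sides and η, θ the diagonals of an ideal quadrilateral with horocycles chosen at each ideal vertex, then λ(η)λ(θ) = λ(α)λ(γ) + λ(β)λ(δ), where λ(e) = exp(ℓ(e)/2) and ℓ(e) is the signed hyperbolic distance along the geodesic e between the two horocycles at its endpoints. -/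
/-- The Ptolemy relation for lambda lengths of a decorated ideal quadrilateral
in the hyperbolic upper half-plane.  The ideal vertices are points
`p 0 < p 1 < p 2 < p 3` on the real boundary, each decorated with a horocycle
of Euclidean diameter `t i > 0`; the lambda length of the geodesic joining two
decorated ideal points is `λ = |p i - p j| / √(t i * t j)`.  Then for the
sides `α = p₀p₁`, `β = p₁p₂`, `γ = p₂p₃`, `δ = p₃p₀` and the diagonals
`η = p₀p₂`, `θ = p₁p₃` one has `λ(η)λ(θ) = λ(α)λ(γ) + λ(β)λ(δ)`. -/
theorem lambda_length_ptolemy (p t : Fin 4 → ℝ)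
    (hp : p 0 < p 1 ∧ p 1 < p 2 ∧ p 2 < p 3) (ht : ∀ i, 0 < t i) :
    let lam : Fin 4 → Fin 4 → ℝ := fun i j => |p i - p j| / Real.sqrt (t i * t j)
    lam 0 2 * lam 1 3 = lam 0 1 * lam 2 3 + lam 1 2 * lam 3 0 := by
  intro lam
  obtain ⟨h01, h12, h23⟩ := hp
  have h02 := h01.trans h12
  have h13 := h12.trans h23
  have h03 := h02.trans h23
  have s : ∀ i, Real.sqrt (t i) > 0 := fun i => Real.sqrt_pos.2 (ht i)
  have key : ∀ i j : Fin 4, Real.sqrt (t i * t j) = Real.sqrt (t i) * Real.sqrt (t j) :=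
    fun i j => Real.sqrt_mul (ht i).le _
  have a02 : |p 0 - p 2| = p 2 - p 0 := by rw [abs_of_neg (by linarith)]; ring
  have a13 : |p 1 - p 3| = p 3 - p 1 := by rw [abs_of_neg (by linarith)]; ring
  have a01 : |p 0 - p 1| = p 1 - p 0 := by rw [abs_of_neg (by linarith)]; ring
  have a23 : |p 2 - p 3| = p 3 - p 2 := by rw [abs_of_neg (by linarith)]; ring
  have a12 : |p 1 - p 2| = p 2 - p 1 := by rw [abs_of_neg (by linarith)]; ring
  have a30 : |p 3 - p 0| = p 3 - p 0 := abs_of_pos (by linarith)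
  simp only [lam, key, a02, a13, a01, a23, a12, a30]
  field_simp
  ring
end

section
/- In the type A_2 coefficient dynamics over the universal semifield, the Y-seed mutation sequence μ_1, μ_2, μ_1, μ_2, μ_1 starting from the Y-seed ((y_1, y_2), B) with B = [[0,1],[-1,0]] returns, after these five mutations, the initial Y-seed with the two coordinates and the sign of B swapped; hence applying the five mutations twice (ten mutations total) returns exactly the initial Y-seed. -/
/-!
Both matrices `±[[0, 1], [-1, 0]]` are sent to their negatives by either mutation, so on seeds
`((a, b), ±B)` each `μ_k` is an explicit birational map of `(a, b)`. Starting from `((a, b), B)`,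
the sequence `μ₁, μ₂, μ₁, μ₂, μ₁` passes through the seeds
`(a⁻¹, ab/(a+1))`, `(b/(ab+a+1), (a+1)/ab)`, `((ab+a+1)/b, 1/(a(b+1)))`, `(1/b, a(b+1))` and ends
at `((b, a), -B)`; from `((b, a), -B)` the same sequence runs through these seeds backwards,
each `μ_k` being an involution. The denominators that occur are products of `a`, `b`, `a + 1`,
`b + 1` and `ab + a + 1`, none of which vanishes at the generic point `(y₁, y₂)`.
-/

/-- The field `ℚ(y₁, y₂)`, with ordinary addition playing the role of `⊕`. -/
abbrev F19 : Type := FractionRing (MvPolynomial (Fin 2) ℚ)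

/-- Matrix mutation in direction `k`. -/
def matMut (B : Matrix (Fin 2) (Fin 2) ℤ) (k : Fin 2) : Matrix (Fin 2) (Fin 2) ℤ :=
  Matrix.of fun i j =>
    if i = k ∨ j = k then -B i j
    else B i j + max (B i k) 0 * max (B k j) 0 - max (-B i k) 0 * max (-B k j) 0

/-- Y-seed mutation `μ_k` of a Y-seed `((y₁, y₂), B)` over `ℚ(y₁, y₂)`:
`y'_k = y_k⁻¹`, `y'_j = y_j y_k^{[b_kj]₊} (y_k + 1)^{-b_kj}` for `j ≠ k`, and
`B` mutates by matrix mutation. -/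
noncomputable def muY (s : (Fin 2 → F19) × Matrix (Fin 2) (Fin 2) ℤ) (k : Fin 2) :
    (Fin 2 → F19) × Matrix (Fin 2) (Fin 2) ℤ :=
  (fun j => if j = k then (s.1 k)⁻¹
    else s.1 j * (s.1 k) ^ (max (s.2 k j) 0) * (s.1 k + 1) ^ (-(s.2 k j)),
   matMut s.2 k)

lemma seed_eq_iff {x y x' y' : F19} {B : Matrix (Fin 2) (Fin 2) ℤ} :
    (![x, y], B) = (![x', y'], B) ↔ x = x' ∧ y = y' := by
  simp [Matrix.vecCons_inj]

lemma matMut_A2 (k : Fin 2) : matMut !![0, 1; -1, 0] k = -!![0, 1; -1, 0] := by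
  fin_cases k <;> decide

lemma matMut_neg_A2 (k : Fin 2) : matMut (-!![0, 1; -1, 0]) k = !![0, 1; -1, 0] := by
  fin_cases k <;> decide

section Mutations

variable (a b : F19)

lemma muY_A2_zero :
    muY (![a, b], !![0, 1; -1, 0]) 0 = (![a⁻¹, a * b / (a + 1)], -!![0, 1; -1, 0]) := by
  refine Prod.ext (funext fun j => ?_) (matMut_A2 0)
  fin_cases j <;> simp [muY, div_eq_mul_inv, mul_comm]

lemma muY_A2_one :
    muY (![a, b], !![0, 1; -1, 0]) 1 = (![a * (b + 1), b⁻¹], -!![0, 1; -1, 0]) := by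
  refine Prod.ext (funext fun j => ?_) (matMut_A2 1)
  fin_cases j <;> simp [muY]

lemma muY_neg_A2_zero :
    muY (![a, b], -!![0, 1; -1, 0]) 0 = (![a⁻¹, b * (a + 1)], !![0, 1; -1, 0]) := by
  refine Prod.ext (funext fun j => ?_) (matMut_neg_A2 0)
  fin_cases j <;> simp [muY]

lemma muY_neg_A2_one :
    muY (![a, b], -!![0, 1; -1, 0]) 1 = (![a * b / (b + 1), b⁻¹], !![0, 1; -1, 0]) := by
  refine Prod.ext (funext fun j => ?_) (matMut_neg_A2 1)
  fin_cases j <;> simp [muY, div_eq_mul_inv, mul_comm]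

end Mutations

section Pentagon

variable {a b : F19} (ha : a ≠ 0) (hb : b ≠ 0) (ha₁ : a + 1 ≠ 0) (hb₁ : b + 1 ≠ 0)
  (hab : a * b + a + 1 ≠ 0)
include ha hb ha₁ hb₁ hab

lemma muY_pentagon_A2 :
    muY (muY (muY (muY (muY (![a, b], !![0, 1; -1, 0]) 0) 1) 0) 1) 0
      = (![b, a], -!![0, 1; -1, 0]) := by
  have h₂ : muY (![a⁻¹, a * b / (a + 1)], -!![0, 1; -1, 0]) 1
      = (![b / (a * b + a + 1), (a + 1) / (a * b)], !![0, 1; -1, 0]) := by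
    rw [muY_neg_A2_one, seed_eq_iff]; grind
  have h₃ : muY (![b / (a * b + a + 1), (a + 1) / (a * b)], !![0, 1; -1, 0]) 0
      = (![(a * b + a + 1) / b, (a * (b + 1))⁻¹], -!![0, 1; -1, 0]) := by
    rw [muY_A2_zero, seed_eq_iff]; grind
  have h₄ : muY (![(a * b + a + 1) / b, (a * (b + 1))⁻¹], -!![0, 1; -1, 0]) 1
      = (![b⁻¹, a * (b + 1)], !![0, 1; -1, 0]) := by
    rw [muY_neg_A2_one, seed_eq_iff]; grind
  have h₅ : muY (![b⁻¹, a * (b + 1)], !![0, 1; -1, 0]) 0 = (![b, a], -!![0, 1; -1, 0]) := by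
    rw [muY_A2_zero, seed_eq_iff]; grind
  rw [muY_A2_zero, h₂, h₃, h₄, h₅]

lemma muY_pentagon_neg_A2 :
    muY (muY (muY (muY (muY (![b, a], -!![0, 1; -1, 0]) 0) 1) 0) 1) 0
      = (![a, b], !![0, 1; -1, 0]) := by
  have h₂ : muY (![b⁻¹, a * (b + 1)], !![0, 1; -1, 0]) 1
      = (![(a * b + a + 1) / b, (a * (b + 1))⁻¹], -!![0, 1; -1, 0]) := by
    rw [muY_A2_one, seed_eq_iff]; grind
  have h₃ : muY (![(a * b + a + 1) / b, (a * (b + 1))⁻¹], -!![0, 1; -1, 0]) 0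
      = (![b / (a * b + a + 1), (a + 1) / (a * b)], !![0, 1; -1, 0]) := by
    rw [muY_neg_A2_zero, seed_eq_iff]; grind
  have h₄ : muY (![b / (a * b + a + 1), (a + 1) / (a * b)], !![0, 1; -1, 0]) 1
      = (![a⁻¹, a * b / (a + 1)], -!![0, 1; -1, 0]) := by
    rw [muY_A2_one, seed_eq_iff]; grind
  have h₅ : muY (![a⁻¹, a * b / (a + 1)], -!![0, 1; -1, 0]) 0 = (![a, b], !![0, 1; -1, 0]) := by
    rw [muY_neg_A2_zero, seed_eq_iff]; grind
  rw [muY_neg_A2_zero, h₂, h₃, h₄, h₅]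

end Pentagon

lemma MvPolynomial.algebraMap_ne_zero_of_constantCoeff_ne_zero {σ R K : Type*} [CommRing R]
    [CommRing K] [Algebra (MvPolynomial σ R) K] [IsFractionRing (MvPolynomial σ R) K]
    {p : MvPolynomial σ R} (hp : constantCoeff p ≠ 0) : algebraMap _ K p ≠ 0 :=
  mt IsFractionRing.to_map_eq_zero_iff.mp (ne_of_apply_ne constantCoeff (by simpa))

/-- In type A₂ coefficient dynamics, the Y-seed mutation sequence
`μ₁, μ₂, μ₁, μ₂, μ₁` applied to `((y₁, y₂), B)` with `B = [[0,1],[-1,0]]`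
returns the initial Y-seed with the two coordinates and the sign of `B`
swapped; hence ten mutations return exactly the initial Y-seed. -/
theorem typeA2_coefficient_period
    : let y : Fin 2 → F19 :=
        fun i => algebraMap (MvPolynomial (Fin 2) ℚ) F19 (MvPolynomial.X i)
      let B : Matrix (Fin 2) (Fin 2) ℤ := !![0, 1; -1, 0]
      let s0 := (y, B)
      let s5 := muY (muY (muY (muY (muY s0 0) 1) 0) 1) 0
      (s5.1 0 = y 1 ∧ s5.1 1 = y 0 ∧ s5.2 = -B) ∧
      muY (muY (muY (muY (muY s5 0) 1) 0) 1) 0 = s0 := by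
  intro y B s0 s5
  have hy : y = ![y 0, y 1] := by
    ext i
    fin_cases i <;> rfl
  have hX (i : Fin 2) : y i ≠ 0 :=
    mt IsFractionRing.to_map_eq_zero_iff.mp (MvPolynomial.X_ne_zero i)
  have hne (p : MvPolynomial (Fin 2) ℚ) (hp : MvPolynomial.constantCoeff p ≠ 0) :
      algebraMap _ F19 p ≠ 0 :=
    MvPolynomial.algebraMap_ne_zero_of_constantCoeff_ne_zero hp
  have hX₁ (i : Fin 2) : y i + 1 ≠ 0 := by
    simpa [y] using hne (.X i + 1) (by simp)
  have hXX : y 0 * y 1 + y 0 + 1 ≠ 0 := by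
    simpa [y] using hne (.X 0 * .X 1 + .X 0 + 1) (by simp)
  have hs0 : s0 = (![y 0, y 1], B) := by
    rw [← hy]
  have hs5 : s5 = (![y 1, y 0], -B) := by
    show muY (muY (muY (muY (muY s0 0) 1) 0) 1) 0 = _
    rw [hs0]
    exact muY_pentagon_A2 (hX 0) (hX 1) (hX₁ 0) (hX₁ 1) hXX
  refine ⟨⟨by rw [hs5]; rfl, by rw [hs5]; rfl, by rw [hs5]⟩, ?_⟩
  rw [hs5, muY_pentagon_neg_A2 (hX 0) (hX 1) (hX₁ 0) (hX₁ 1) hXX, hs0]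
end
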